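/- arXiv:1702.02955 — 6 statements merged into one kernel-verified Lean document; each statement's English description precedes it below -/
import Mathlib

section
/- Let n ≥ 1, let A : ℝ → Matrix(n,n,ℝ) be continuous, and for matrices Q, A define S(Q,A) ∈ Matrix(n,n,ℝ) entrywise by S(Q,A)_{ij} = (QᵀAQ)_{ij} if i > j, S(Q,A)_{ij} = 0 if i = j, and S(Q,A)_{ij} = −(QᵀAQ)_{ji} if i < j. If Q : ℝ → Matrix(n,n,ℝ) is differentiable, satisfies Q'(t) = Q(t)·S(Q(t),A(t)) for all t, and Q(0)ᵀQ(0) = I, then Q(t)ᵀQ(t) = I for all t ∈ ℝ (i.e., orthogonality is preserved by the continuous QR flow). -/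
open Matrix

/-- The skew-symmetric matrix `S(Q,A)` of the continuous QR method:
`S(Q,A)_{ij} = (QᵀAQ)_{ij}` if `i > j`, `0` if `i = j`, `-(QᵀAQ)_{ji}` if `i < j`. -/
noncomputable def qrS {n : ℕ} (Q A : Matrix (Fin n) (Fin n) ℝ) :
    Matrix (Fin n) (Fin n) ℝ :=
  fun i j =>
    if j < i then (Qᵀ * A * Q) i j
    else if i < j then -((Qᵀ * A * Q) j i)
    else 0

section QRAux

attribute [local instance] Matrix.normedAddCommGroup Matrix.normedSpace

open Set in
/-- Grönwall: a solution of a linearly-bounded ODE vanishing at `0` vanishes for `b ≥ 0`. -/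
lemma gronwall_zero_aux {E : Type*} [NormedAddCommGroup E] [NormedSpace ℝ E] {Y D : ℝ → E} {g : ℝ → ℝ}
    (hY : ∀ t, HasDerivAt Y (D t) t) (hg : Continuous g)
    (hb : ∀ s, ‖D s‖ ≤ g s * ‖Y s‖) (h0 : Y 0 = 0) {b : ℝ} (hb0 : 0 ≤ b) :
    Y b = 0 := by
  obtain ⟨C, hC⟩ := (isCompact_Icc (a := (0 : ℝ)) (b := b)).exists_bound_of_continuousOn
    hg.continuousOn
  set K := max C 0 with hK
  have key : ∀ x ∈ Icc (0 : ℝ) b, ‖Y x‖ ≤ gronwallBound 0 K 0 (x - 0) := by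
    apply norm_le_gronwallBound_of_norm_deriv_right_le
      (fun x _ => (hY x).continuousAt.continuousWithinAt)
      (fun x _ => (hY x).hasDerivWithinAt)
    · simp [h0]
    · intro x hx
      calc ‖D x‖ ≤ g x * ‖Y x‖ := hb x
        _ ≤ K * ‖Y x‖ + 0 := by
            rw [add_zero]
            refine mul_le_mul_of_nonneg_right ?_ (norm_nonneg _)
            exact le_trans (le_abs_self _)
              (le_trans (hC x (Ico_subset_Icc_self hx)) (le_max_left _ _))
  have hb' := key b ⟨hb0, le_rfl⟩
  rw [sub_zero, gronwallBound_ε0_δ0] at hb'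
  exact norm_le_zero_iff.mp hb'

lemma matrix_norm_mul_le {n : ℕ} (M N : Matrix (Fin n) (Fin n) ℝ) :
    ‖M * N‖ ≤ (n : ℝ) * ‖M‖ * ‖N‖ := by
  rw [Matrix.norm_le_iff (by positivity)]
  intro i j
  rw [Matrix.mul_apply]
  calc ‖∑ k, M i k * N k j‖ ≤ ∑ k, ‖M i k * N k j‖ := norm_sum_le _ _
    _ ≤ ∑ _k : Fin n, ‖M‖ * ‖N‖ := by
        refine Finset.sum_le_sum fun k _ => ?_
        rw [norm_mul]
        exact mul_le_mul (Matrix.norm_entry_le_entrywise_sup_norm _)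
          (Matrix.norm_entry_le_entrywise_sup_norm _) (norm_nonneg _) (norm_nonneg _)
    _ = (n : ℝ) * ‖M‖ * ‖N‖ := by
        simp [Finset.sum_const, Finset.card_univ, nsmul_eq_mul, mul_assoc]

lemma qrS_transpose {n : ℕ} (Q A : Matrix (Fin n) (Fin n) ℝ) :
    (qrS Q A)ᵀ = -qrS Q A := by
  ext i j
  simp only [transpose_apply, Matrix.neg_apply, qrS]
  rcases lt_trichotomy i j with h | h | h
  · simp [h, asymm h]
  · simp [h]
  · simp [h, asymm h]

lemma qr_deriv_identity {n : ℕ} (Q S : Matrix (Fin n) (Fin n) ℝ) (hS : Sᵀ = -S) :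
    (Q * S)ᵀ * Q + Qᵀ * (Q * S)
      = Sᵀ * (Qᵀ * Q - 1) + (Qᵀ * Q - 1) * S := by
  rw [Matrix.transpose_mul, hS]
  noncomm_ring

/-- Orthogonality is preserved by the continuous QR flow
`Q'(t) = Q(t) S(Q(t), A(t))`. -/
theorem qr_flow_preserves_orthogonality {n : ℕ} (hn : 1 ≤ n)
    (A : ℝ → Matrix (Fin n) (Fin n) ℝ) (hA : Continuous A)
    (Q : ℝ → Matrix (Fin n) (Fin n) ℝ)
    (hQ : ∀ t i j, HasDerivAt (fun s => Q s i j)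
      ((Q t * qrS (Q t) (A t)) i j) t)
    (h0 : (Q 0)ᵀ * Q 0 = 1) :
    ∀ t : ℝ, (Q t)ᵀ * Q t = 1 := by
  classical
  set S : ℝ → Matrix (Fin n) (Fin n) ℝ := fun t => qrS (Q t) (A t) with hS_def
  set Y : ℝ → Matrix (Fin n) (Fin n) ℝ := fun t => (Q t)ᵀ * Q t - 1 with hY_def
  set D : ℝ → Matrix (Fin n) (Fin n) ℝ := fun t => (S t)ᵀ * Y t + Y t * S t with hD_def
  -- continuity of Q and S
  have hQc : Continuous Q := continuous_matrix fun i j =>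
    continuous_iff_continuousAt.mpr fun t => (hQ t i j).continuousAt
  have hP : Continuous fun t => (Q t)ᵀ * A t * Q t :=
    (hQc.matrix_transpose.matrix_mul hA).matrix_mul hQc
  have hSc : Continuous S := by
    apply continuous_matrix
    intro i j
    simp only [hS_def, qrS]
    by_cases h1 : j < i
    · simp only [if_pos h1]
      exact hP.matrix_elem i j
    · simp only [if_neg h1]
      by_cases h2 : i < j
      · simp only [if_pos h2]
        exact (hP.matrix_elem j i).neg
      · simp only [if_neg h2]
        exact continuous_const
  -- derivative of Y
  have hY' : ∀ t, HasDerivAt Y (D t) t := by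
    intro t
    have h2 : (Q t * S t)ᵀ * Q t + (Q t)ᵀ * (Q t * S t) = D t := by
      rw [hD_def]
      exact qr_deriv_identity (Q t) (S t) (qrS_transpose _ _)
    rw [← h2]; refine hasDerivAt_pi.mpr ?_
    intro i
    rw [hasDerivAt_pi]
    intro j
    have hfun : (fun s => Y s i j)
        = fun s => (∑ k, Q s k i * Q s k j) - (1 : Matrix (Fin n) (Fin n) ℝ) i j := by
      funext s
      simp [hY_def, Matrix.sub_apply, Matrix.mul_apply, Matrix.transpose_apply]
    have hsum : HasDerivAt (fun s => ∑ k, Q s k i * Q s k j)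
        (∑ k, ((Q t * S t) k i * Q t k j + Q t k i * (Q t * S t) k j)) t :=
      HasDerivAt.fun_sum fun k _ => (hQ t k i).mul (hQ t k j)
    have hder := hsum.sub_const ((1 : Matrix (Fin n) (Fin n) ℝ) i j)
    rw [hfun]
    convert hder using 1
    simp only [Matrix.add_apply, Matrix.mul_apply, Matrix.transpose_apply,
      Finset.sum_add_distrib]
  -- the linear bound
  set g : ℝ → ℝ := fun s => 2 * (n : ℝ) * ‖S s‖ with hg_def
  have hgc : Continuous g := by
    exact continuous_const.mul hSc.norm
  have hbound : ∀ s, ‖D s‖ ≤ g s * ‖Y s‖ := by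
    intro s
    calc ‖D s‖ ≤ ‖(S s)ᵀ * Y s‖ + ‖Y s * S s‖ := norm_add_le _ _
      _ ≤ (n : ℝ) * ‖(S s)ᵀ‖ * ‖Y s‖ + (n : ℝ) * ‖Y s‖ * ‖S s‖ :=
          add_le_add (matrix_norm_mul_le _ _) (matrix_norm_mul_le _ _)
      _ = g s * ‖Y s‖ := by rw [Matrix.norm_transpose, hg_def]; ring
  have hY0 : Y 0 = 0 := by simp [hY_def, h0]
  have key : ∀ t, Y t = 0 := by
    intro t
    rcases le_or_gt 0 t with h | h
    · exact gronwall_zero_aux hY' hgc hbound hY0 h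
    · have hZ : ∀ s, HasDerivAt (fun u => Y (-u)) ((-1 : ℝ) • D (-s)) s := fun s =>
        (hY' (-s)).scomp s (hasDerivAt_neg s)
      have hres := gronwall_zero_aux (Y := fun u => Y (-u))
        (D := fun s => (-1 : ℝ) • D (-s)) (g := fun s => g (-s)) hZ
        (hgc.comp continuous_neg)
        (fun s => by simpa [norm_smul] using hbound (-s))
        (by simpa using hY0) (b := -t) (by linarith)
      simpa using hres
  intro t
  have := key t
  rw [hY_def] at this
  exact sub_eq_zero.mp this
end QRAux
end

section
/- Let δ > 0 and r < δ²/4, and set u₋ := (δ − √(δ² − 4r))/2 and u₊ := (δ + √(δ² − 4r))/2. If u : [0,∞) → ℝ is differentiable, satisfies u'(t) = −u(t)(u(t) − δ) − r for all t ≥ 0, and u(0) > u₋, then u(t) → u₊ as t → ∞. -/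
open Filter Set

/-! Writing `u' = -(u - a)(u - b)` with `s = b - a`, the quantity `e^{st} (u - b) / (u - a)` is a
first integral. Its cross-multiplied form `F = e^{st} (u - b) (u₀ - a) - (u₀ - b) (u - a)` solves
the linear equation `F' = (b - u) F` with `F(0) = 0`, so `F ≡ 0` by uniqueness, with no need to know
in advance that `u` stays above `a`. Solving `F = 0` for `u` gives
`u - b = (u₀ - b) s / ((u₀ - a) e^{st} - (u₀ - b))`, whose denominator is positive and
tends to infinity once `u₀ > a`. -/

theorem eqOn_zero_of_hasDerivWithinAt_mul_self {c F : ℝ → ℝ} {a b : ℝ}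
    (hc : ContinuousOn c (Icc a b)) (hF : ContinuousOn F (Icc a b))
    (hF' : ∀ t ∈ Ico a b, HasDerivWithinAt F (c t * F t) (Ici t) t) (ha : F a = 0) :
    EqOn F 0 (Icc a b) := by
  obtain ⟨C, hC⟩ := isCompact_Icc.exists_bound_of_continuousOn hc
  have hlip : ∀ t ∈ Ico a b, LipschitzOnWith (Real.toNNReal C) (c t * ·) univ := fun t ht =>
    ((lipschitzWith_smul (c t)).weaken <| by
      simpa [← NNReal.coe_le_coe] using Or.inl (hC t (Ico_subset_Icc_self ht))).lipschitzOnWith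
  refine ODE_solution_unique_of_mem_Icc_right (g := fun _ => 0) hlip hF hF'
    (fun _ _ => mem_univ _) continuousOn_const (fun t _ => ?_) (fun _ _ => mem_univ _) ha
  simpa using hasDerivWithinAt_const t (Ici t) (0 : ℝ)

namespace Logistic

variable {a b : ℝ} {u : ℝ → ℝ}
  (hu : ∀ t, 0 ≤ t → HasDerivWithinAt u (-((u t - a) * (u t - b))) (Ici 0) t)
include hu

theorem exp_mul_sub_mul_eq {t : ℝ} (ht : 0 ≤ t) :
    Real.exp ((b - a) * t) * (u t - b) * (u 0 - a) = (u 0 - b) * (u t - a) := by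
  set F : ℝ → ℝ := fun τ => Real.exp ((b - a) * τ) * (u τ - b) * (u 0 - a) - (u 0 - b) * (u τ - a)
  have hu_cont : ContinuousOn u (Icc 0 t) := fun τ hτ =>
    (hu τ hτ.1).continuousWithinAt.mono Icc_subset_Ici_self
  have hF' : ∀ τ ∈ Ico 0 t, HasDerivWithinAt F ((b - u τ) * F τ) (Ici τ) τ := by
    intro τ hτ
    have huτ := (hu τ hτ.1).mono (Ici_subset_Ici.mpr hτ.1)
    have hexp := ((hasDerivAt_id τ).const_mul (b - a)).exp.hasDerivWithinAt (s := Ici τ)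
    refine (((hexp.mul (huτ.sub_const b)).mul_const (u 0 - a)).sub
      ((huτ.sub_const a).const_mul (u 0 - b))).congr_deriv ?_
    simp only [F, id]
    ring
  have hF : ContinuousOn F (Icc 0 t) := by fun_prop
  have hF_zero := eqOn_zero_of_hasDerivWithinAt_mul_self (continuousOn_const.sub hu_cont) hF hF'
    (by simp [F]) ⟨ht, le_rfl⟩
  simpa [F, sub_eq_zero] using hF_zero

theorem sub_right_eq (hab : a < b) (h0 : a < u 0) {t : ℝ} (ht : 0 ≤ t) :
    u t - b = (u 0 - b) * (b - a) / ((u 0 - a) * Real.exp ((b - a) * t) - (u 0 - b)) := by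
  have hexp : 1 ≤ Real.exp ((b - a) * t) := Real.one_le_exp (mul_nonneg (sub_nonneg.mpr hab.le) ht)
  have hden : 0 < (u 0 - a) * Real.exp ((b - a) * t) - (u 0 - b) := by nlinarith
  rw [eq_div_iff hden.ne']
  linear_combination exp_mul_sub_mul_eq hu ht

theorem tendsto_atTop (hab : a < b) (h0 : a < u 0) : Tendsto u atTop (nhds b) := by
  have hden : Tendsto (fun t => (u 0 - a) * Real.exp ((b - a) * t) - (u 0 - b)) atTop atTop :=
    tendsto_atTop_add_const_right _ _ <| (Real.tendsto_exp_atTop.comp <|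
      tendsto_id.const_mul_atTop (sub_pos.mpr hab)).const_mul_atTop (sub_pos.mpr h0)
  refine tendsto_sub_nhds_zero_iff.mp <|
    ((tendsto_const_nhds (x := (u 0 - b) * (b - a))).div_atTop hden).congr' ?_
  filter_upwards [eventually_ge_atTop 0] with t ht
  exact (sub_right_eq hu hab h0 ht).symm

end Logistic

theorem unique_linear_tracks_below_critical_rate_general (δ r : ℝ)
    (hr : r < δ ^ 2 / 4) (u : ℝ → ℝ)
    (hu : ∀ t : ℝ, 0 ≤ t →
      HasDerivWithinAt u (-(u t) * (u t - δ) - r) (Set.Ici (0 : ℝ)) t)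
    (h0 : (δ - Real.sqrt (δ ^ 2 - 4 * r)) / 2 < u 0) :
    Tendsto u atTop (nhds ((δ + Real.sqrt (δ ^ 2 - 4 * r)) / 2)) := by
  set s := Real.sqrt (δ ^ 2 - 4 * r)
  have hs_sq : s ^ 2 = δ ^ 2 - 4 * r := Real.sq_sqrt (by linarith)
  have hs : 0 < s := Real.sqrt_pos.mpr (by linarith)
  have hfactor : ∀ x, -x * (x - δ) - r = -((x - (δ - s) / 2) * (x - (δ + s) / 2)) := fun x => by
    linear_combination -hs_sq / 4
  refine Logistic.tendsto_atTop (fun t ht => ?_) (by linarith) h0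
  simpa only [hfactor] using hu t ht

/-- Below the critical rate, every solution of `u' = −u(u − δ) − r` starting
above the unstable equilibrium `u₋` converges to the stable equilibrium `u₊`. -/
theorem unique_linear_tracks_below_critical_rate (δ r : ℝ) (hδ : 0 < δ)
    (hr : r < δ ^ 2 / 4) (u : ℝ → ℝ)
    (hu : ∀ t : ℝ, 0 ≤ t →
      HasDerivWithinAt u (-(u t) * (u t - δ) - r) (Set.Ici (0 : ℝ)) t)
    (h0 : (δ - Real.sqrt (δ ^ 2 - 4 * r)) / 2 < u 0) :
    Tendsto u atTop (nhds ((δ + Real.sqrt (δ ^ 2 - 4 * r)) / 2)) :=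
  unique_linear_tracks_below_critical_rate_general δ r hr u hu h0
end

section
/- Let δ > 0 and r ∈ ℝ, and consider the nonautonomous scalar equation x'(t) = −(x(t) − rt)((x(t) − rt)² − δ²). (a) For c ∈ ℝ, the function x(t) = rt + c is a solution if and only if δ²c − c³ = r. (b) Setting r_c := 2δ³/(3√3): if |r| < r_c there are exactly three distinct such values of c; if |r| = r_c there are exactly two distinct values (with c = δ/√3 a double root of δ²c − c³ − r when r = r_c, and c = −δ/√3 a double root when r = −r_c); and if |r| > r_c there is exactly one such value. -/
/-!
With `a = δ / √3` the cubic `δ²c - c³ = 3a²c - c³` is odd, has its local minimum `-2a³`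
at `-a` and its local maximum `2a³` at `a`, and tends to `∓∞` at `±∞`; so `r_c = 2a³`
and, by the intermediate value theorem, every `|r| < r_c` has a root in each of
`(-∞, -a)`, `(-a, a)`, `(a, ∞)`. There are no others: three distinct roots sum to `0`
(Vieta), which pins down any fourth one. For `|r| > r_c` a second root is impossible
because two distinct roots make the discriminant `27(4a⁶ - r²)` a square, and for
`|r| = r_c` the cubic factors as `-(c ∓ a)²(c ± 2a)`.
-/

open Set

theorem forall_hasDerivAt_affine_iff (r c : ℝ) (v : ℝ → ℝ) :
    (∀ t, HasDerivAt (fun s => r * s + c) (v t) t) ↔ ∀ t, v t = r := by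
  have hline (t : ℝ) : HasDerivAt (fun s => r * s + c) r t := by
    simpa using ((hasDerivAt_id t).const_mul r).add_const c
  exact ⟨fun h t => (h t).unique (hline t), fun h t => h t ▸ hline t⟩

theorem hasDerivAt_cubic (p r x : ℝ) :
    HasDerivAt (fun c : ℝ => p * c - c ^ 3 - r) (p - 3 * x ^ 2) x := by
  simpa using (((hasDerivAt_id x).const_mul p).sub (hasDerivAt_pow 3 x)).sub_const r

theorem roots_eq_pair_of_critical (a : ℝ) :
    {c : ℝ | 3 * a ^ 2 * c - c ^ 3 = 2 * a ^ 3} = {a, -2 * a} := by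
  ext c
  have h : 3 * a ^ 2 * c - c ^ 3 - 2 * a ^ 3 = -((c - a) ^ 2 * (c + 2 * a)) := by ring
  rw [mem_ofPred_eq, ← sub_eq_zero, h, neg_eq_zero, mul_eq_zero, pow_eq_zero_iff two_ne_zero,
    sub_eq_zero, add_eq_zero_iff_eq_neg, mem_insert_iff, mem_singleton_iff, neg_mul]

theorem cubic_two_mul_add_le_neg {a s : ℝ} (ha : 0 ≤ a) (hs : 1 ≤ s) :
    3 * a ^ 2 * (2 * a + s) - (2 * a + s) ^ 3 ≤ -s := by
  have hs₀ : 0 ≤ s := by linarith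
  nlinarith [mul_nonneg ha (mul_nonneg ha ha), mul_nonneg ha (mul_nonneg ha hs₀),
    mul_nonneg ha (mul_nonneg hs₀ hs₀), mul_nonneg (sub_nonneg.2 hs) (mul_nonneg hs₀ hs₀)]

theorem exists_cubic_lt_lt_cubic_neg {a : ℝ} (ha : 0 ≤ a) (r : ℝ) :
    ∃ M, a ≤ M ∧ 3 * a ^ 2 * M - M ^ 3 < r ∧ r < 3 * a ^ 2 * (-M) - (-M) ^ 3 := by
  set M := 2 * a + (|r| + 1)
  have hM : 3 * a ^ 2 * M - M ^ 3 ≤ -(|r| + 1) :=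
    cubic_two_mul_add_le_neg ha (le_add_of_nonneg_left (abs_nonneg r))
  have hodd : 3 * a ^ 2 * (-M) - (-M) ^ 3 = -(3 * a ^ 2 * M - M ^ 3) := by ring
  exact ⟨M, by linarith [abs_nonneg r], by linarith [neg_abs_le r], by linarith [le_abs_self r]⟩

section Cubic

variable {a r : ℝ}

theorem sq_add_mul_add_sq_eq_of_roots {c d : ℝ} (hc : 3 * a ^ 2 * c - c ^ 3 = r)
    (hd : 3 * a ^ 2 * d - d ^ 3 = r) (hcd : c ≠ d) :
    c ^ 2 + c * d + d ^ 2 = 3 * a ^ 2 := by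
  have h : (c - d) * (3 * a ^ 2 - (c ^ 2 + c * d + d ^ 2)) = 0 := by
    linear_combination hc - hd
  linarith [(mul_eq_zero.mp h).resolve_left (sub_ne_zero.mpr hcd)]

theorem add_add_eq_zero_of_roots {c₁ c₂ c₃ : ℝ} (h₁ : 3 * a ^ 2 * c₁ - c₁ ^ 3 = r)
    (h₂ : 3 * a ^ 2 * c₂ - c₂ ^ 3 = r) (h₃ : 3 * a ^ 2 * c₃ - c₃ ^ 3 = r)
    (h₁₂ : c₁ ≠ c₂) (h₁₃ : c₁ ≠ c₃) (h₂₃ : c₂ ≠ c₃) :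
    c₁ + c₂ + c₃ = 0 := by
  have h : (c₂ - c₃) * (c₁ + c₂ + c₃) = 0 := by
    linear_combination sq_add_mul_add_sq_eq_of_roots h₁ h₂ h₁₂ -
      sq_add_mul_add_sq_eq_of_roots h₁ h₃ h₁₃
  exact (mul_eq_zero.mp h).resolve_left (sub_ne_zero.mpr h₂₃)

theorem eq_or_eq_or_eq_of_roots {c₁ c₂ c₃ c : ℝ} (h₁ : 3 * a ^ 2 * c₁ - c₁ ^ 3 = r)
    (h₂ : 3 * a ^ 2 * c₂ - c₂ ^ 3 = r) (h₃ : 3 * a ^ 2 * c₃ - c₃ ^ 3 = r)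
    (h₁₂ : c₁ ≠ c₂) (h₁₃ : c₁ ≠ c₃) (h₂₃ : c₂ ≠ c₃) (hc : 3 * a ^ 2 * c - c ^ 3 = r) :
    c = c₁ ∨ c = c₂ ∨ c = c₃ := by
  by_contra! ⟨hc₁, hc₂, hc₃⟩
  have hsum := add_add_eq_zero_of_roots hc h₁ h₂ hc₁ hc₂ h₁₂
  have hsum' := add_add_eq_zero_of_roots h₁ h₂ h₃ h₁₂ h₁₃ h₂₃
  exact hc₃ (by linarith)

theorem sq_le_of_roots {c d : ℝ} (hc : 3 * a ^ 2 * c - c ^ 3 = r)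
    (hd : 3 * a ^ 2 * d - d ^ 3 = r) (hcd : c ≠ d) :
    r ^ 2 ≤ (2 * a ^ 3) ^ 2 := by
  have hS := sq_add_mul_add_sq_eq_of_roots hc hd hcd
  have hr : r = c ^ 2 * d + c * d ^ 2 := by linear_combination -hc - c * hS
  have hdisc :
      27 * ((2 * a ^ 3) ^ 2 - r ^ 2) = ((c - d) * (2 * (c + d) ^ 2 + c * d)) ^ 2 := by
    linear_combination
      (-4 * ((3 * a ^ 2) ^ 2 + 3 * a ^ 2 * (c ^ 2 + c * d + d ^ 2) +
        (c ^ 2 + c * d + d ^ 2) ^ 2)) * hS - 27 * (r + c ^ 2 * d + c * d ^ 2) * hr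
  nlinarith [sq_nonneg ((c - d) * (2 * (c + d) ^ 2 + c * d))]

theorem ncard_roots_eq_three (ha : 0 < a) (hr : |r| < 2 * a ^ 3) :
    {c : ℝ | 3 * a ^ 2 * c - c ^ 3 = r}.ncard = 3 := by
  obtain ⟨hr₁, hr₂⟩ := abs_lt.mp hr
  obtain ⟨M, haM, hM, hM'⟩ := exists_cubic_lt_lt_cubic_neg ha.le r
  have hmax : 3 * a ^ 2 * a - a ^ 3 = 2 * a ^ 3 := by ring
  have hmin : 3 * a ^ 2 * (-a) - (-a) ^ 3 = -(2 * a ^ 3) := by ring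
  have hg : Continuous fun c : ℝ => 3 * a ^ 2 * c - c ^ 3 := by fun_prop
  obtain ⟨c₁, ⟨-, hc₁⟩, h₁⟩ : ∃ c ∈ Ioo (-M) (-a), 3 * a ^ 2 * c - c ^ 3 = r :=
    intermediate_value_Ioo' (by linarith) hg.continuousOn ⟨by linarith, hM'⟩
  obtain ⟨c₂, ⟨hc₂, hc₂'⟩, h₂⟩ : ∃ c ∈ Ioo (-a) a, 3 * a ^ 2 * c - c ^ 3 = r :=
    intermediate_value_Ioo (by linarith) hg.continuousOn ⟨by linarith, by linarith⟩
  obtain ⟨c₃, ⟨hc₃, -⟩, h₃⟩ : ∃ c ∈ Ioo a M, 3 * a ^ 2 * c - c ^ 3 = r :=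
    intermediate_value_Ioo' haM hg.continuousOn ⟨hM, by linarith⟩
  have h₁₂ : c₁ ≠ c₂ := by linarith
  have h₁₃ : c₁ ≠ c₃ := by linarith
  have h₂₃ : c₂ ≠ c₃ := by linarith
  refine ncard_eq_three.mpr ⟨c₁, c₂, c₃, h₁₂, h₁₃, h₂₃, Subset.antisymm ?_ ?_⟩
  · exact fun c hc => eq_or_eq_or_eq_of_roots h₁ h₂ h₃ h₁₂ h₁₃ h₂₃ hc
  · simpa only [insert_subset_iff, singleton_subset_iff] using ⟨h₁, h₂, h₃⟩

theorem ncard_roots_eq_two (ha : 0 < a) (hr : |r| = 2 * a ^ 3) :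
    {c : ℝ | 3 * a ^ 2 * c - c ^ 3 = r}.ncard = 2 := by
  rcases (abs_eq (by positivity)).mp hr with rfl | rfl
  · rw [roots_eq_pair_of_critical]
    exact ncard_pair (by linarith)
  · rw [show -(2 * a ^ 3) = 2 * (-a) ^ 3 by ring, ← neg_sq a, roots_eq_pair_of_critical]
    exact ncard_pair (by linarith)

theorem ncard_roots_eq_one (ha : 0 < a) (hr : 2 * a ^ 3 < |r|) :
    {c : ℝ | 3 * a ^ 2 * c - c ^ 3 = r}.ncard = 1 := by
  obtain ⟨M, haM, hM, hM'⟩ := exists_cubic_lt_lt_cubic_neg ha.le r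
  obtain ⟨c₀, -, h₀⟩ : ∃ c ∈ Ioo (-M) M, 3 * a ^ 2 * c - c ^ 3 = r :=
    intermediate_value_Ioo' (by linarith) (by fun_prop) ⟨hM, hM'⟩
  have hr' : (2 * a ^ 3) ^ 2 < r ^ 2 :=
    sq_lt_sq.mpr (by rwa [abs_of_pos (by positivity : 0 < 2 * a ^ 3)])
  refine ncard_eq_one.mpr ⟨c₀, Subset.antisymm (fun c hc => ?_) (singleton_subset_iff.mpr h₀)⟩
  by_contra hne
  exact (sq_le_of_roots hc h₀ hne).not_gt hr'

end Cubic

/-- Invariant lines of the Bistable Linear example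
`x' = −(x − rt)((x − rt)² − δ²)`: `x(t) = rt + c` is a solution iff
`δ²c − c³ = r`; with `r_c = 2δ³/(3√3)` there are exactly three such values of
`c` for `|r| < r_c`, exactly two for `|r| = r_c` (with `±δ/√3` a double root),
and exactly one for `|r| > r_c`. -/
theorem bistable_linear_invariant_lines (δ r : ℝ) (hδ : 0 < δ) :
    (∀ c : ℝ,
      (∀ t : ℝ, HasDerivAt (fun s => r * s + c)
          (-((r * t + c) - r * t) * (((r * t + c) - r * t) ^ 2 - δ ^ 2)) t) ↔
        δ ^ 2 * c - c ^ 3 = r) ∧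
    (|r| < 2 * δ ^ 3 / (3 * Real.sqrt 3) →
      ({c : ℝ | δ ^ 2 * c - c ^ 3 = r}).ncard = 3) ∧
    (|r| = 2 * δ ^ 3 / (3 * Real.sqrt 3) →
      ({c : ℝ | δ ^ 2 * c - c ^ 3 = r}).ncard = 2 ∧
      (r = 2 * δ ^ 3 / (3 * Real.sqrt 3) →
        δ ^ 2 * (δ / Real.sqrt 3) - (δ / Real.sqrt 3) ^ 3 - r = 0 ∧
        deriv (fun c : ℝ => δ ^ 2 * c - c ^ 3 - r) (δ / Real.sqrt 3) = 0) ∧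
      (r = -(2 * δ ^ 3 / (3 * Real.sqrt 3)) →
        δ ^ 2 * (-(δ / Real.sqrt 3)) - (-(δ / Real.sqrt 3)) ^ 3 - r = 0 ∧
        deriv (fun c : ℝ => δ ^ 2 * c - c ^ 3 - r) (-(δ / Real.sqrt 3)) = 0)) ∧
    (|r| > 2 * δ ^ 3 / (3 * Real.sqrt 3) →
      ({c : ℝ | δ ^ 2 * c - c ^ 3 = r}).ncard = 1) := by
  have h3 : Real.sqrt 3 ^ 2 = 3 := Real.sq_sqrt (by norm_num)
  have hs : Real.sqrt 3 ≠ 0 := by positivity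
  set a := δ / Real.sqrt 3
  have ha : 0 < a := by positivity
  have hδa : δ ^ 2 = 3 * a ^ 2 := by simp only [a, div_pow, h3]; field_simp
  have hrc : 2 * δ ^ 3 / (3 * Real.sqrt 3) = 2 * a ^ 3 := by
    simp only [a, div_pow, pow_succ _ 2, h3]; field_simp
  simp only [hrc, hδa, add_sub_cancel_left, (hasDerivAt_cubic _ r _).deriv]
  refine ⟨fun c => ?_, ncard_roots_eq_three ha, fun hr => ⟨ncard_roots_eq_two ha hr, ?_, ?_⟩,
    ncard_roots_eq_one ha⟩
  · rw [forall_hasDerivAt_affine_iff, forall_const]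
    constructor <;> intro h <;> linear_combination h
  · rintro rfl; constructor <;> ring
  · rintro rfl; constructor <;> ring
end

section
/- Let δ > 0 and r > 2δ³/(3√3). Then the cubic polynomial u³ − δ²u + r has a unique real root u*, and u* < −δ. Moreover, every differentiable function u : [0,∞) → ℝ satisfying u'(t) = −u(t)(u(t)² − δ²) − r for all t ≥ 0 converges to u* as t → ∞ (monotonically). -/
open Filter

/-- If the derivative is positive whenever the solution is below `a`, and it starts
at or above `a`, then it stays at or above `a`. -/
lemma bl_stay_above (u d : ℝ → ℝ) (a : ℝ)
    (hu : ∀ t, 0 ≤ t → HasDerivWithinAt u (d t) (Set.Ici 0) t)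
    (hd : ∀ t, 0 ≤ t → u t < a → 0 < d t)
    (h0 : a ≤ u 0) : ∀ t, 0 ≤ t → a ≤ u t := by
  intro t1 ht1
  by_contra hlt
  push_neg at hlt
  have hc : ContinuousOn u (Set.Icc 0 t1) := fun x hx =>
    ((hu x hx.1).continuousWithinAt).mono Set.Icc_subset_Ici_self
  set S : Set ℝ := Set.Icc 0 t1 ∩ u ⁻¹' (Set.Ici a) with hSdef
  have hS0 : (0:ℝ) ∈ S := ⟨⟨le_rfl, ht1⟩, h0⟩
  have hSb : BddAbove S := ⟨t1, fun x hx => hx.1.2⟩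
  have hScl : IsClosed S := hc.preimage_isClosed_of_isClosed isClosed_Icc isClosed_Ici
  have hs : sSup S ∈ S := hScl.csSup_mem ⟨0, hS0⟩ hSb
  set s := sSup S with hsdef
  have hs0 : 0 ≤ s := hs.1.1
  have hst1 : s ≤ t1 := hs.1.2
  have hus : a ≤ u s := hs.2
  have hsne : s < t1 := by
    rcases lt_or_eq_of_le hst1 with h | h
    · exact h
    · exfalso; rw [h] at hus; linarith
  have hbelow : ∀ x ∈ Set.Ioc s t1, u x < a := by
    intro x hx
    by_contra hge; push_neg at hge
    have hxS : x ∈ S := ⟨⟨hs0.trans hx.1.le, hx.2⟩, hge⟩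
    exact absurd (le_csSup hSb hxS) (not_le.2 hx.1)
  have hmono : StrictMonoOn u (Set.Icc s t1) := by
    apply strictMonoOn_of_deriv_pos (convex_Icc s t1)
      (hc.mono (Set.Icc_subset_Icc hs0 le_rfl))
    intro x hx
    rw [interior_Icc] at hx
    have hx0 : 0 < x := lt_of_le_of_lt hs0 hx.1
    have hda : HasDerivAt u (d x) x := (hu x hx0.le).hasDerivAt (Ici_mem_nhds hx0)
    rw [hda.deriv]
    exact hd x hx0.le (hbelow x ⟨hx.1, hx.2.le⟩)
  have := hmono ⟨le_rfl, hst1⟩ ⟨hst1, le_rfl⟩ hsne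
  linarith

/-- Mirror of `bl_stay_above`. -/
lemma bl_stay_below (u d : ℝ → ℝ) (a : ℝ)
    (hu : ∀ t, 0 ≤ t → HasDerivWithinAt u (d t) (Set.Ici 0) t)
    (hd : ∀ t, 0 ≤ t → a < u t → d t < 0)
    (h0 : u 0 ≤ a) : ∀ t, 0 ≤ t → u t ≤ a := by
  intro t ht
  have key := bl_stay_above (fun s => -u s) (fun s => -d s) (-a)
    (fun s hs => (hu s hs).neg)
    (fun s hs h => by
      simp only [neg_lt_neg_iff] at h
      simpa using hd s hs h)
    (by simpa using h0)
  have := key t ht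
  simpa using this

lemma bl_antitoneOn (u d : ℝ → ℝ)
    (hu : ∀ t, 0 ≤ t → HasDerivWithinAt u (d t) (Set.Ici 0) t)
    (hd : ∀ t, 0 < t → d t ≤ 0) : AntitoneOn u (Set.Ici 0) := by
  apply antitoneOn_of_deriv_nonpos (convex_Ici 0)
    (fun t ht => (hu t ht).continuousWithinAt)
  · intro x hx; rw [interior_Ici] at hx
    exact (((hu x (le_of_lt hx)).hasDerivAt (Ici_mem_nhds hx)).differentiableAt).differentiableWithinAt
  · intro x hx; rw [interior_Ici] at hx
    rw [((hu x (le_of_lt hx)).hasDerivAt (Ici_mem_nhds hx)).deriv]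
    exact hd x hx

lemma bl_monotoneOn (u d : ℝ → ℝ)
    (hu : ∀ t, 0 ≤ t → HasDerivWithinAt u (d t) (Set.Ici 0) t)
    (hd : ∀ t, 0 < t → 0 ≤ d t) : MonotoneOn u (Set.Ici 0) := by
  apply monotoneOn_of_deriv_nonneg (convex_Ici 0)
    (fun t ht => (hu t ht).continuousWithinAt)
  · intro x hx; rw [interior_Ici] at hx
    exact (((hu x (le_of_lt hx)).hasDerivAt (Ici_mem_nhds hx)).differentiableAt).differentiableWithinAt
  · intro x hx; rw [interior_Ici] at hx
    rw [((hu x (le_of_lt hx)).hasDerivAt (Ici_mem_nhds hx)).deriv]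
    exact hd x hx

lemma bl_tendsto_of_antitoneOn (u : ℝ → ℝ) (a : ℝ)
    (hmono : AntitoneOn u (Set.Ici 0))
    (hbd : ∀ t, 0 ≤ t → a ≤ u t) :
    ∃ L, a ≤ L ∧ (∀ t, 0 ≤ t → L ≤ u t) ∧ Tendsto u atTop (nhds L) := by
  set v : ℝ → ℝ := fun t => u (max t 0) with hvdef
  have hv : Antitone v := fun s t hst =>
    hmono (le_max_right s 0) (le_max_right t 0) (max_le_max hst le_rfl)
  have hbdd : BddBelow (Set.range v) := by
    refine ⟨a, ?_⟩
    rintro x ⟨t, rfl⟩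
    exact hbd _ (le_max_right _ _)
  have htend : Tendsto v atTop (nhds (⨅ t, v t)) := tendsto_atTop_ciInf hv hbdd
  refine ⟨⨅ t, v t, ?_, ?_, ?_⟩
  · exact le_ciInf fun t => hbd _ (le_max_right _ _)
  · intro t ht
    have h2 : v t = u t := by simp only [hvdef]; rw [max_eq_left ht]
    rw [← h2]
    exact ciInf_le hbdd t
  · refine htend.congr' ?_
    filter_upwards [eventually_ge_atTop (0:ℝ)] with t ht
    simp [hvdef, max_eq_left ht]

lemma bl_tendsto_of_monotoneOn (u : ℝ → ℝ) (a : ℝ)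
    (hmono : MonotoneOn u (Set.Ici 0))
    (hbd : ∀ t, 0 ≤ t → u t ≤ a) :
    ∃ L, L ≤ a ∧ (∀ t, 0 ≤ t → u t ≤ L) ∧ Tendsto u atTop (nhds L) := by
  set v : ℝ → ℝ := fun t => u (max t 0) with hvdef
  have hv : Monotone v := fun s t hst =>
    hmono (le_max_right s 0) (le_max_right t 0) (max_le_max hst le_rfl)
  have hbdd : BddAbove (Set.range v) := by
    refine ⟨a, ?_⟩
    rintro x ⟨t, rfl⟩
    exact hbd _ (le_max_right _ _)
  have htend : Tendsto v atTop (nhds (⨆ t, v t)) := tendsto_atTop_ciSup hv hbdd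
  refine ⟨⨆ t, v t, ?_, ?_, ?_⟩
  · exact ciSup_le fun t => hbd _ (le_max_right _ _)
  · intro t ht
    have h2 : v t = u t := by simp only [hvdef]; rw [max_eq_left ht]
    rw [← h2]
    exact le_ciSup hbdd t
  · refine htend.congr' ?_
    filter_upwards [eventually_ge_atTop (0:ℝ)] with t ht
    simp [hvdef, max_eq_left ht]

/-- Above the critical rate `2δ³/(3√3)`, the cubic `u³ − δ²u + r` has a unique
real root `u* < −δ`, and every solution of `u' = −u(u² − δ²) − r` on `[0,∞)`
converges monotonically to `u*`. -/
theorem bistable_linear_tips_above_critical_rate (δ r : ℝ) (hδ : 0 < δ)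
    (hr : 2 * δ ^ 3 / (3 * Real.sqrt 3) < r) :
    ∃ ustar : ℝ,
      (ustar ^ 3 - δ ^ 2 * ustar + r = 0 ∧
        ∀ v : ℝ, v ^ 3 - δ ^ 2 * v + r = 0 → v = ustar) ∧
      ustar < -δ ∧
      ∀ u : ℝ → ℝ,
        (∀ t : ℝ, 0 ≤ t →
          HasDerivWithinAt u (-(u t) * ((u t) ^ 2 - δ ^ 2) - r)
            (Set.Ici (0 : ℝ)) t) →
        Tendsto u atTop (nhds ustar) ∧
          (MonotoneOn u (Set.Ici (0 : ℝ)) ∨ AntitoneOn u (Set.Ici (0 : ℝ))) := by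
  have hs3 : (0:ℝ) < Real.sqrt 3 := Real.sqrt_pos.2 (by norm_num)
  have hs3sq : Real.sqrt 3 ^ 2 = 3 := Real.sq_sqrt (by norm_num)
  have hs3lt2 : Real.sqrt 3 < 2 := by nlinarith
  set a : ℝ := δ / Real.sqrt 3 with hadef
  have ha : 0 < a := div_pos hδ hs3
  have hδ2 : δ ^ 2 = 3 * a ^ 2 := by
    rw [hadef, div_pow]; field_simp [hs3sq]; exact hs3sq
  have hcrit : 2 * δ ^ 3 / (3 * Real.sqrt 3) = 2 * a ^ 3 := by
    rw [hadef, div_pow]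
    rw [show Real.sqrt 3 ^ 3 = 3 * Real.sqrt 3 by
      rw [pow_succ, hs3sq]]
    field_simp
  rw [hcrit] at hr
  have hr0 : 0 < r := lt_trans (by positivity) hr
  set F : ℝ → ℝ := fun x => x ^ 3 - δ ^ 2 * x + r with hFdef
  have hFcont : Continuous F := by fun_prop
  have hF' : ∀ x : ℝ, HasDerivAt F (3 * x ^ 2 - δ ^ 2) x := by
    intro x
    have h := ((hasDerivAt_pow 3 x).sub ((hasDerivAt_id x).const_mul (δ ^ 2))).add_const r
    have h2 : (3:ℕ) * x ^ (3 - 1) - δ ^ 2 * 1 = 3 * x ^ 2 - δ ^ 2 := by norm_num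
    rw [h2] at h
    exact h
  -- F is positive on [-2a, ∞)
  have hFpos2a : ∀ x : ℝ, -(2 * a) ≤ x → 0 < F x := by
    intro x hx
    have hid : F x - (r - 2 * a ^ 3) = (x - a) ^ 2 * (x + 2 * a) := by
      simp only [hFdef, hδ2]; ring
    nlinarith [sq_nonneg (x - a), mul_nonneg (sq_nonneg (x - a)) (by linarith : (0:ℝ) ≤ x + 2 * a)]
  -- F strictly increasing on Iic (-a)
  have hmonoF : StrictMonoOn F (Set.Iic (-a)) := by
    apply strictMonoOn_of_deriv_pos (convex_Iic _) hFcont.continuousOn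
    intro x hx
    rw [interior_Iic] at hx
    rw [(hF' x).deriv]
    have : x < -a := hx
    nlinarith
  -- a root exists below -2a
  set M : ℝ := 2 * a + r + 1 with hMdef
  have hFM : F (-M) < 0 := by
    simp only [hFdef, hδ2, hMdef]
    nlinarith [mul_pos ha hr0, sq_nonneg a, sq_nonneg r, mul_pos ha ha,
      mul_pos (mul_pos ha ha) hr0, mul_pos hr0 hr0, mul_pos (mul_pos hr0 hr0) ha]
  have hF2a : 0 < F (-(2 * a)) := hFpos2a _ le_rfl
  have hM2a : -M ≤ -(2 * a) := by simp only [hMdef]; linarith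
  obtain ⟨ustar, hmem, hroot⟩ : ∃ x ∈ Set.Icc (-M) (-(2 * a)), F x = 0 := by
    have h := intermediate_value_Icc hM2a hFcont.continuousOn
    have h0 : (0:ℝ) ∈ Set.Icc (F (-M)) (F (-(2 * a))) := ⟨hFM.le, hF2a.le⟩
    obtain ⟨x, hx, hx0⟩ := h h0
    exact ⟨x, hx, hx0⟩
  have hlt2a : ustar < -(2 * a) := by
    rcases lt_or_eq_of_le hmem.2 with h | h
    · exact h
    · exfalso; rw [h] at hroot; linarith
  have h2aδ : δ ≤ 2 * a := by
    rw [hadef]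
    rw [show 2 * (δ / Real.sqrt 3) = 2 * δ / Real.sqrt 3 by ring, le_div_iff₀ hs3]
    nlinarith
  have hustδ : ustar < -δ := by linarith
  have hust_a : ustar ∈ Set.Iic (-a) := by
    simp only [Set.mem_Iic]; linarith
  -- sign of F
  have hpos : ∀ x : ℝ, ustar < x → 0 < F x := by
    intro x hx
    rcases le_or_gt (-(2 * a)) x with h | h
    · exact hFpos2a x h
    · have hxa : x ∈ Set.Iic (-a) := by simp only [Set.mem_Iic]; linarith
      have := hmonoF hust_a hxa hx
      rw [hroot] at this
      exact this
  have hneg : ∀ x : ℝ, x < ustar → F x < 0 := by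
    intro x hx
    have hxa : x ∈ Set.Iic (-a) := by simp only [Set.mem_Iic]; linarith
    have := hmonoF hxa hust_a hx
    rwa [hroot] at this
  refine ⟨ustar, ⟨hroot, ?_⟩, hustδ, ?_⟩
  · -- uniqueness
    intro v hv
    rcases lt_trichotomy v ustar with h | h | h
    · exact absurd hv (ne_of_lt (hneg v h))
    · exact h
    · exact absurd hv (ne_of_gt (hpos v h))
  -- dynamics
  intro u hu
  have hu' : ∀ t, 0 ≤ t → HasDerivWithinAt u (-(F (u t))) (Set.Ici 0) t := by
    intro t ht
    have h := hu t ht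
    have : -(u t) * ((u t) ^ 2 - δ ^ 2) - r = -(F (u t)) := by simp only [hFdef]; ring
    rwa [this] at h
  rcases le_or_gt ustar (u 0) with h0 | h0
  · -- starts at or above ustar: stays above, antitone, converges
    have hstay : ∀ t, 0 ≤ t → ustar ≤ u t :=
      bl_stay_above u (fun t => -(F (u t))) ustar hu'
        (fun t ht hlt => by have := hneg _ hlt; show (0:ℝ) < -(F (u t)); linarith) h0
    have hanti : AntitoneOn u (Set.Ici 0) := by
      apply bl_antitoneOn u (fun t => -(F (u t))) hu'
      intro t ht
      have hst := hstay t ht.le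
      rcases lt_or_eq_of_le hst with h | h
      · have := hpos _ h; linarith
      · rw [← h, hroot]; simp
    obtain ⟨L, hLa, hLle, hLtend⟩ := bl_tendsto_of_antitoneOn u ustar hanti hstay
    have hL : L = ustar := by
      by_contra hne
      have hLgt : ustar < L := lt_of_le_of_ne hLa (Ne.symm hne)
      have hLu0 : L ≤ u 0 := hLle 0 le_rfl
      obtain ⟨x0, hx0mem, hx0min⟩ :=
        isCompact_Icc.exists_isMinOn (Set.nonempty_Icc.2 hLu0) hFcont.continuousOn
      set c : ℝ := F x0 with hcdef
      have hc : 0 < c := hpos x0 (lt_of_lt_of_le hLgt hx0mem.1)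
      have hwd : ∀ t, 0 ≤ t →
          HasDerivWithinAt (fun s => u s + c * s) (-(F (u t)) + c) (Set.Ici 0) t := by
        intro t ht
        have h2 : HasDerivWithinAt (fun s : ℝ => c * s) c (Set.Ici 0) t := by
          simpa using ((hasDerivAt_id t).const_mul c).hasDerivWithinAt
        exact (hu' t ht).add h2
      have hwanti : AntitoneOn (fun s => u s + c * s) (Set.Ici 0) := by
        apply bl_antitoneOn _ _ hwd
        intro t ht
        have h1 : L ≤ u t := hLle t ht.le
        have h2 : u t ≤ u 0 := hanti Set.self_mem_Ici (Set.mem_Ici.2 ht.le) ht.le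
        have h3 : c ≤ F (u t) := isMinOn_iff.1 hx0min (u t) ⟨h1, h2⟩
        linarith
      have hfin : ∀ t, 0 ≤ t → u t + c * t ≤ u 0 := by
        intro t ht
        have := hwanti Set.self_mem_Ici (Set.mem_Ici.2 ht) ht
        simpa using this
      set T : ℝ := (u 0 - L) / c + 1 with hTdef
      have hT : 0 ≤ T := by
        have : 0 ≤ (u 0 - L) / c := div_nonneg (by linarith) hc.le
        simp only [hTdef]; linarith
      have h1 := hfin T hT
      have h2 := hLle T hT
      have h3 : c * T = (u 0 - L) + c := by
        simp only [hTdef]; field_simp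
      linarith
    rw [hL] at hLtend
    exact ⟨hLtend, Or.inr hanti⟩
  · -- starts below ustar: stays below, monotone, converges
    have hstay : ∀ t, 0 ≤ t → u t ≤ ustar :=
      bl_stay_below u (fun t => -(F (u t))) ustar hu'
        (fun t ht hlt => by have := hpos _ hlt; show -(F (u t)) < (0:ℝ); linarith) h0.le
    have hmono : MonotoneOn u (Set.Ici 0) := by
      apply bl_monotoneOn u (fun t => -(F (u t))) hu'
      intro t ht
      have hst := hstay t ht.le
      rcases lt_or_eq_of_le hst with h | h
      · have := hneg _ h; linarith
      · rw [h, hroot]; simp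
    obtain ⟨L, hLa, hLle, hLtend⟩ := bl_tendsto_of_monotoneOn u ustar hmono hstay
    have hL : L = ustar := by
      by_contra hne
      have hLlt : L < ustar := lt_of_le_of_ne hLa hne
      have hLu0 : u 0 ≤ L := hLle 0 le_rfl
      obtain ⟨x0, hx0mem, hx0max⟩ :=
        isCompact_Icc.exists_isMaxOn (Set.nonempty_Icc.2 hLu0) hFcont.continuousOn
      set c : ℝ := -(F x0) with hcdef
      have hc : 0 < c := by
        have := hneg x0 (lt_of_le_of_lt hx0mem.2 hLlt)
        simp only [hcdef]; linarith
      have hwd : ∀ t, 0 ≤ t →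
          HasDerivWithinAt (fun s => u s - c * s) (-(F (u t)) - c) (Set.Ici 0) t := by
        intro t ht
        have h2 : HasDerivWithinAt (fun s : ℝ => c * s) c (Set.Ici 0) t := by
          simpa using ((hasDerivAt_id t).const_mul c).hasDerivWithinAt
        exact (hu' t ht).sub h2
      have hwmono : MonotoneOn (fun s => u s - c * s) (Set.Ici 0) := by
        apply bl_monotoneOn _ _ hwd
        intro t ht
        have h1 : u 0 ≤ u t := hmono Set.self_mem_Ici (Set.mem_Ici.2 ht.le) ht.le
        have h2 : u t ≤ L := hLle t ht.le
        have h3 : F (u t) ≤ F x0 := isMaxOn_iff.1 hx0max (u t) ⟨h1, h2⟩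
        simp only [hcdef] at *
        linarith
      have hfin : ∀ t, 0 ≤ t → u 0 ≤ u t - c * t := by
        intro t ht
        have := hwmono Set.self_mem_Ici (Set.mem_Ici.2 ht) ht
        simpa using this
      set T : ℝ := (L - u 0) / c + 1 with hTdef
      have hT : 0 ≤ T := by
        have : 0 ≤ (L - u 0) / c := div_nonneg (by linarith) hc.le
        simp only [hTdef]; linarith
      have h1 := hfin T hT
      have h2 := hLle T hT
      have h3 : c * T = (L - u 0) + c := by
        simp only [hTdef]; field_simp
      linarith
    rw [hL] at hLtend
    exact ⟨hLtend, Or.inl hmono⟩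
end

section
/- Let δ > 0 and 0 < r < 2δ³/(3√3), and let u₊ be the largest real root of u³ − δ²u + r = 0. Then δ/√3 < u₊ < δ, and the differentiable function u : [0,∞) → ℝ satisfying u'(t) = −u(t)(u(t)² − δ²) − r with u(0) = δ is strictly decreasing and converges to u₊ as t → ∞. -/
open Filter

set_option maxHeartbeats 1000000 in
/-- Below the critical rate `2δ³/(3√3)` (with `0 < r`), the largest real root
`u₊` of `u³ − δ²u + r = 0` lies in `(δ/√3, δ)`, and the solution of
`u' = −u(u² − δ²) − r` with `u(0) = δ` is strictly decreasing and converges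
to `u₊`. -/
theorem bistable_linear_tracks_below_critical_rate (δ r : ℝ) (hδ : 0 < δ)
    (hr0 : 0 < r) (hr : r < 2 * δ ^ 3 / (3 * Real.sqrt 3))
    (uplus : ℝ) (hroot : uplus ^ 3 - δ ^ 2 * uplus + r = 0)
    (hmax : ∀ v : ℝ, v ^ 3 - δ ^ 2 * v + r = 0 → v ≤ uplus) :
    δ / Real.sqrt 3 < uplus ∧ uplus < δ ∧
    ∀ u : ℝ → ℝ,
      (∀ t : ℝ, 0 ≤ t →
        HasDerivWithinAt u (-(u t) * ((u t) ^ 2 - δ ^ 2) - r)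
          (Set.Ici (0 : ℝ)) t) →
      u 0 = δ →
      StrictAntiOn u (Set.Ici (0 : ℝ)) ∧ Tendsto u atTop (nhds uplus) := by
  have h3 : (0:ℝ) < Real.sqrt 3 := Real.sqrt_pos.2 (by norm_num)
  have hs3 : Real.sqrt 3 ^ 2 = 3 := Real.sq_sqrt (by norm_num)
  -- Part 1: root bounds
  have hglow : (δ / Real.sqrt 3) ^ 3 - δ ^ 2 * (δ / Real.sqrt 3) + r < 0 := by
    have key : (δ / Real.sqrt 3) ^ 3 - δ ^ 2 * (δ / Real.sqrt 3) + r
        = r - 2 * δ ^ 3 / (3 * Real.sqrt 3) := by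
      field_simp
      linear_combination (-δ^3) * hs3
    rw [key]; linarith
  have hle : δ / Real.sqrt 3 ≤ δ := by
    rw [div_le_iff₀ h3]
    nlinarith [hs3]
  have hcont : ContinuousOn (fun v : ℝ => v ^ 3 - δ ^ 2 * v + r)
      (Set.Icc (δ / Real.sqrt 3) δ) := by
    apply Continuous.continuousOn; continuity
  obtain ⟨c, hc, hgc⟩ := intermediate_value_Ioo hle hcont
    (Set.mem_Ioo.2 ⟨hglow, by
      have h : δ ^ 3 - δ ^ 2 * δ + r = r := by ring
      rw [h]; exact hr0⟩)
  have hup3 : δ / Real.sqrt 3 < uplus := lt_of_lt_of_le hc.1 (hmax c hgc)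
  have hupδ : uplus < δ := by
    by_contra h
    push_neg at h
    nlinarith [hroot, mul_nonneg (hδ.le.trans h) (sub_nonneg.2 (pow_le_pow_left₀ hδ.le h 2))]
  refine ⟨hup3, hupδ, ?_⟩
  -- basic positivity
  have hup0 : 0 < uplus := lt_trans (div_pos hδ h3) hup3
  have hsq : δ ^ 2 < 3 * uplus ^ 2 := by
    have h1 : δ < uplus * Real.sqrt 3 := (div_lt_iff₀ h3).1 hup3
    have h2 : δ * δ < (uplus * Real.sqrt 3) * (uplus * Real.sqrt 3) :=
      mul_lt_mul'' h1 h1 hδ.le hδ.le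
    have h4 : (uplus * Real.sqrt 3) * (uplus * Real.sqrt 3) = 3 * uplus ^ 2 := by
      have : (uplus * Real.sqrt 3) * (uplus * Real.sqrt 3) = uplus ^ 2 * Real.sqrt 3 ^ 2 := by
        ring
      rw [this, hs3]; ring
    nlinarith [h2, h4]
  -- algebraic lemmas about g v = v^3 - δ^2 v + r
  have alg1 : ∀ v : ℝ, uplus ≤ v → 0 ≤ v ^ 3 - δ ^ 2 * v + r := by
    intro v hv
    have e1 : 0 ≤ (v - uplus) * uplus := mul_nonneg (sub_nonneg.2 hv) hup0.le
    have e2 : 0 ≤ (v - uplus) * (v + uplus) :=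
      mul_nonneg (sub_nonneg.2 hv) (by linarith)
    have hfac : 0 ≤ v ^ 2 + v * uplus + uplus ^ 2 - δ ^ 2 := by nlinarith [e1, e2, hsq]
    have e3 : 0 ≤ (v - uplus) * (v ^ 2 + v * uplus + uplus ^ 2 - δ ^ 2) :=
      mul_nonneg (sub_nonneg.2 hv) hfac
    nlinarith [e3, hroot]
  have alg2 : ∀ v : ℝ, uplus < v → 0 < v ^ 3 - δ ^ 2 * v + r := by
    intro v hv
    have e1 : 0 ≤ (v - uplus) * uplus := mul_nonneg (sub_nonneg.2 hv.le) hup0.le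
    have e2 : 0 ≤ (v - uplus) * (v + uplus) :=
      mul_nonneg (sub_nonneg.2 hv.le) (by linarith)
    have hfac : 0 < v ^ 2 + v * uplus + uplus ^ 2 - δ ^ 2 := by nlinarith [e1, e2, hsq]
    have e3 : 0 < (v - uplus) * (v ^ 2 + v * uplus + uplus ^ 2 - δ ^ 2) :=
      mul_pos (sub_pos.2 hv) hfac
    nlinarith [e3, hroot]
  have alg3 : ∀ v : ℝ, uplus ≤ v → v ≤ δ →
      0 ≤ -(v ^ 3 - δ ^ 2 * v + r) + 3 * δ ^ 2 * (v - uplus) := by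
    intro v h1v h2v
    have hv0 : 0 < v := lt_of_lt_of_le hup0 h1v
    have e1 : v ^ 2 ≤ δ ^ 2 := pow_le_pow_left₀ hv0.le h2v 2
    have e2 : uplus ^ 2 ≤ δ ^ 2 := pow_le_pow_left₀ hup0.le hupδ.le 2
    have e3 : v * uplus ≤ δ * δ := mul_le_mul h2v hupδ.le hup0.le hδ.le
    have hfac : 0 ≤ 4 * δ ^ 2 - (v ^ 2 + v * uplus + uplus ^ 2) := by nlinarith [e1, e2, e3]
    have e4 : 0 ≤ (v - uplus) * (4 * δ ^ 2 - (v ^ 2 + v * uplus + uplus ^ 2)) :=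
      mul_nonneg (sub_nonneg.2 h1v) hfac
    nlinarith [e4, hroot]
  have alg4 : ∀ a b : ℝ, uplus ≤ a → a ≤ b →
      a ^ 3 - δ ^ 2 * a + r ≤ b ^ 3 - δ ^ 2 * b + r := by
    intro a b ha hab
    have ha0 : 0 < a := lt_of_lt_of_le hup0 ha
    have e1 : 0 ≤ (b - a) * a := mul_nonneg (sub_nonneg.2 hab) ha0.le
    have e2 : 0 ≤ (b - a) * (b + a) := mul_nonneg (sub_nonneg.2 hab) (by linarith)
    have e3 : 0 ≤ (a - uplus) * (a + uplus) :=
      mul_nonneg (sub_nonneg.2 ha) (by linarith)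
    have hfac : 0 ≤ a ^ 2 + a * b + b ^ 2 - δ ^ 2 := by nlinarith [e1, e2, e3, hsq]
    have e4 : 0 ≤ (b - a) * (a ^ 2 + a * b + b ^ 2 - δ ^ 2) :=
      mul_nonneg (sub_nonneg.2 hab) hfac
    nlinarith [e4]
  -- the ODE part
  intro u hderiv hu0
  have hu_cont : ContinuousOn u (Set.Ici (0:ℝ)) := fun t ht =>
    (hderiv t ht).continuousWithinAt
  have hderiv' : ∀ t : ℝ, 0 < t →
      HasDerivAt u (-(u t) * ((u t) ^ 2 - δ ^ 2) - r) t := fun t ht =>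
    (hderiv t ht.le).hasDerivAt (Ici_mem_nhds ht)
  -- Gronwall-type lower bound
  have gron : ∀ T : ℝ, 0 ≤ T → (∀ s : ℝ, 0 < s → s < T → uplus ≤ u s ∧ u s ≤ δ) →
      δ - uplus ≤ (u T - uplus) * Real.exp (3 * δ ^ 2 * T) := by
    intro T hT hmem
    rcases eq_or_lt_of_le hT with rfl | hT'
    · simp [hu0]
    have hw : MonotoneOn (fun s => (u s - uplus) * Real.exp (3 * δ ^ 2 * s))
        (Set.Icc 0 T) := by
      refine monotoneOn_of_hasDerivWithinAt_nonneg (f' := fun x =>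
          ((-(u x) * ((u x) ^ 2 - δ ^ 2) - r) + 3 * δ ^ 2 * (u x - uplus)) *
            Real.exp (3 * δ ^ 2 * x)) (convex_Icc 0 T) ?_ ?_ ?_
      · exact ((hu_cont.mono Set.Icc_subset_Ici_self).sub continuousOn_const).mul
          (Continuous.continuousOn (by continuity))
      · intro x hx
        rw [interior_Icc] at hx
        have h1 : HasDerivAt (fun s => u s - uplus)
            (-(u x) * ((u x) ^ 2 - δ ^ 2) - r) x := (hderiv' x hx.1).sub_const uplus
        have h2 : HasDerivAt (fun s : ℝ => Real.exp (3 * δ ^ 2 * s))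
            (Real.exp (3 * δ ^ 2 * x) * (3 * δ ^ 2)) x := by
          simpa using ((hasDerivAt_id x).const_mul (3 * δ ^ 2)).exp
        have h3 := (h1.mul h2).hasDerivWithinAt
          (s := interior (Set.Icc (0:ℝ) T))
        exact h3.congr_deriv (by ring)
      · intro x hx
        rw [interior_Icc] at hx
        obtain ⟨hlo, hhi⟩ := hmem x hx.1 hx.2
        refine mul_nonneg ?_ (Real.exp_nonneg _)
        have h5 := alg3 (u x) hlo hhi
        nlinarith [h5]
    have := hw (Set.mem_Icc.2 ⟨le_rfl, hT⟩) (Set.mem_Icc.2 ⟨hT, le_rfl⟩) hT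
    simpa [hu0] using this
  -- lower bound invariance
  have low : ∀ t : ℝ, 0 ≤ t → uplus ≤ u t := by
    by_contra hcon
    push_neg at hcon
    obtain ⟨t₀, ht₀, hlt⟩ := hcon
    set E := Set.Icc (0:ℝ) t₀ ∩ u ⁻¹' Set.Iic uplus with hE
    have hE_closed : IsClosed E :=
      (hu_cont.mono Set.Icc_subset_Ici_self).preimage_isClosed_of_isClosed
        isClosed_Icc isClosed_Iic
    have hE_ne : E.Nonempty := ⟨t₀, ⟨⟨ht₀, le_rfl⟩, hlt.le⟩⟩
    have hbddE : BddBelow E := ⟨0, fun x hx => hx.1.1⟩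
    set t₁ := sInf E with ht₁def
    have ht₁E : t₁ ∈ E := hE_closed.csInf_mem hE_ne hbddE
    have ht₁0 : 0 ≤ t₁ := ht₁E.1.1
    have hut₁ : u t₁ ≤ uplus := ht₁E.2
    have hstep : ∀ s : ℝ, 0 < s → s < t₁ → uplus ≤ u s := by
      intro s hs0 hst
      by_contra h
      push_neg at h
      have hsE : s ∈ E := ⟨⟨hs0.le, hst.le.trans ht₁E.1.2⟩, h.le⟩
      exact absurd (csInf_le hbddE hsE) (not_le.2 hst)
    -- u is antitone on [0, t₁], hence bounded above by δ there
    have hanti : AntitoneOn u (Set.Icc 0 t₁) := by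
      refine antitoneOn_of_hasDerivWithinAt_nonpos
        (f' := fun x => -(u x) * ((u x) ^ 2 - δ ^ 2) - r) (convex_Icc 0 t₁)
        (hu_cont.mono Set.Icc_subset_Ici_self) ?_ ?_
      · intro x hx
        rw [interior_Icc] at hx
        exact (hderiv' x hx.1).hasDerivWithinAt
      · intro x hx
        rw [interior_Icc] at hx
        have h5 := alg1 (u x) (hstep x hx.1 hx.2)
        show -(u x) * ((u x) ^ 2 - δ ^ 2) - r ≤ 0
        nlinarith [h5]
    have hupper : ∀ s : ℝ, 0 < s → s < t₁ → u s ≤ δ := by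
      intro s hs0 hst
      have := hanti (Set.mem_Icc.2 ⟨le_rfl, ht₁0⟩) (Set.mem_Icc.2 ⟨hs0.le, hst.le⟩) hs0.le
      rwa [hu0] at this
    have hg := gron t₁ ht₁0 (fun s hs0 hst => ⟨hstep s hs0 hst, hupper s hs0 hst⟩)
    have h6 : (u t₁ - uplus) * Real.exp (3 * δ ^ 2 * t₁) ≤ 0 :=
      mul_nonpos_of_nonpos_of_nonneg (sub_nonpos.2 hut₁) (Real.exp_nonneg (3 * δ ^ 2 * t₁))
    linarith [hg, h6, hupδ]
  -- upper bound: u is antitone on Ici 0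
  have hanti_global : AntitoneOn u (Set.Ici 0) := by
    refine antitoneOn_of_hasDerivWithinAt_nonpos
      (f' := fun x => -(u x) * ((u x) ^ 2 - δ ^ 2) - r) (convex_Ici 0) hu_cont ?_ ?_
    · intro x hx
      rw [interior_Ici] at hx
      exact (hderiv' x hx).hasDerivWithinAt
    · intro x hx
      rw [interior_Ici] at hx
      have h5 := alg1 (u x) (low x hx.le)
      show -(u x) * ((u x) ^ 2 - δ ^ 2) - r ≤ 0
      nlinarith [h5]
  have hub : ∀ t : ℝ, 0 ≤ t → u t ≤ δ := by
    intro t ht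
    have := hanti_global (Set.mem_Ici.2 le_rfl) (Set.mem_Ici.2 ht) ht
    rwa [hu0] at this
  -- strict lower bound
  have hstrictlow : ∀ t : ℝ, 0 ≤ t → uplus < u t := by
    intro t ht
    have hg := gron t ht (fun s hs0 _ => ⟨low s hs0.le, hub s hs0.le⟩)
    by_contra h
    push_neg at h
    have h6 : (u t - uplus) * Real.exp (3 * δ ^ 2 * t) ≤ 0 :=
      mul_nonpos_of_nonpos_of_nonneg (by linarith) (Real.exp_nonneg _)
    linarith [hg, h6, hupδ]
  -- strict antitonicity
  have hstrict : StrictAntiOn u (Set.Ici (0:ℝ)) := by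
    refine strictAntiOn_of_hasDerivWithinAt_neg
      (f' := fun x => -(u x) * ((u x) ^ 2 - δ ^ 2) - r) (convex_Ici 0) hu_cont ?_ ?_
    · intro x hx
      rw [interior_Ici] at hx
      exact (hderiv' x hx).hasDerivWithinAt
    · intro x hx
      rw [interior_Ici] at hx
      have h5 := alg2 (u x) (hstrictlow x hx.le)
      show -(u x) * ((u x) ^ 2 - δ ^ 2) - r < 0
      nlinarith [h5]
  refine ⟨hstrict, ?_⟩
  -- convergence
  set v : ℝ → ℝ := fun t => u (max t 0) with hv
  have hanti_v : Antitone v := fun a b hab =>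
    hanti_global (Set.mem_Ici.2 (le_max_right a 0)) (Set.mem_Ici.2 (le_max_right b 0))
      (max_le_max hab le_rfl)
  have hbddv : BddBelow (Set.range v) := by
    refine ⟨uplus, ?_⟩
    rintro _ ⟨t, rfl⟩
    exact (hstrictlow _ (le_max_right t 0)).le
  have hlim : Tendsto v atTop (nhds (⨅ t, v t)) := tendsto_atTop_ciInf hanti_v hbddv
  set L := ⨅ t, v t with hL
  have hL_ge : uplus ≤ L := le_ciInf fun t => (hstrictlow _ (le_max_right t 0)).le
  have hL_le : ∀ t : ℝ, 0 ≤ t → L ≤ u t := by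
    intro t ht
    have := ciInf_le hbddv t
    rwa [show v t = u t by rw [hv]; simp [max_eq_left ht]] at this
  have hLup : L = uplus := by
    by_contra hne
    have hLgt : uplus < L := lt_of_le_of_ne hL_ge (Ne.symm hne)
    have hm : 0 < L ^ 3 - δ ^ 2 * L + r := alg2 L hLgt
    set m := L ^ 3 - δ ^ 2 * L + r with hmdef
    have hφ : AntitoneOn (fun t => u t + m * t) (Set.Ici 0) := by
      refine antitoneOn_of_hasDerivWithinAt_nonpos
        (f' := fun x => (-(u x) * ((u x) ^ 2 - δ ^ 2) - r) + m) (convex_Ici 0)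
        (hu_cont.add (Continuous.continuousOn (by continuity))) ?_ ?_
      · intro x hx
        rw [interior_Ici] at hx
        have h1 : HasDerivAt (fun t => u t + m * t)
            ((-(u x) * ((u x) ^ 2 - δ ^ 2) - r) + m) x := by
          refine (hderiv' x hx).add ?_
          simpa using (hasDerivAt_id x).const_mul m
        exact h1.hasDerivWithinAt
      · intro x hx
        rw [interior_Ici] at hx
        have h1 : L ≤ u x := hL_le x hx.le
        have h5 := alg4 L (u x) hLgt.le h1
        show (-(u x) * ((u x) ^ 2 - δ ^ 2) - r) + m ≤ 0
        nlinarith [h5, hmdef]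
    have hLδ : L ≤ δ := by
      have := hL_le 0 le_rfl
      rwa [hu0] at this
    have ht : (0:ℝ) ≤ (δ - L) / m + 1 := by
      have : (0:ℝ) ≤ (δ - L) / m := div_nonneg (by linarith) hm.le
      linarith
    have h1 : u ((δ - L) / m + 1) + m * ((δ - L) / m + 1) ≤ u 0 + m * 0 :=
      hφ (Set.mem_Ici.2 le_rfl) (Set.mem_Ici.2 ht) ht
    rw [hu0] at h1
    have h2 := hL_le _ ht
    have hmul : m * ((δ - L) / m + 1) = δ - L + m := by
      field_simp
    nlinarith [h1, h2, hmul, hm]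
  have hveq : v =ᶠ[atTop] u := by
    filter_upwards [eventually_ge_atTop (0:ℝ)] with t ht
    rw [hv]; simp [max_eq_left ht]
  rw [← hLup]
  exact hlim.congr' hveq
end

section
/- Let 0 < δ < 1 and set r := δ²/(1 − δ). Let λ : ℝ → ℝ be any solution of λ' = rλ(1 − λ) with λ(0) ∈ (0,1) (so 0 < λ(t) < 1 for all t, λ(t) → 0 as t → −∞ and λ(t) → 1 as t → +∞). Then x(t) := λ(t) + δ(1 − λ(t)) satisfies x'(t) = −(x(t) − λ(t))(x(t) − λ(t) − δ) for all t, and (x(t), λ(t)) → (δ, 0) as t → −∞ while (x(t), λ(t)) → (1, 1) as t → +∞. Hence at this rate the planar system x' = −(x − λ)(x − λ − δ), λ' = rλ(1 − λ) has a heteroclinic connection from the equilibrium (δ,0) to the equilibrium (1,1). (For δ = 1/2 this gives the critical rate r = 1/2.) -/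
open Filter

/-- Uniqueness step: `lam` coincides with the explicit logistic solution. -/
lemma logistic_solution_eq (r c : ℝ) (hr : 0 < r) (hc : 0 < c) (lam : ℝ → ℝ)
    (hlamODE : ∀ t : ℝ, HasDerivAt lam (r * lam t * (1 - lam t)) t)
    (h0 : lam 0 = (1 + c * Real.exp (-(r * 0)))⁻¹) :
    ∀ t : ℝ, lam t = (1 + c * Real.exp (-(r * t)))⁻¹ := by
  set g : ℝ → ℝ := fun t => (1 + c * Real.exp (-(r * t)))⁻¹ with hg
  have hDpos : ∀ t, 0 < 1 + c * Real.exp (-(r * t)) := fun t => by positivity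
  have hD1 : ∀ t, 1 < 1 + c * Real.exp (-(r * t)) := fun t => by
    nlinarith [Real.exp_pos (-(r * t))]
  have hgmem : ∀ t, g t ∈ Set.Ioo (0 : ℝ) 1 := fun t =>
    ⟨inv_pos.mpr (hDpos t), inv_lt_one_of_one_lt₀ (hD1 t)⟩
  have hg' : ∀ t, HasDerivAt g (r * g t * (1 - g t)) t := by
    intro t
    have hin : HasDerivAt (fun s : ℝ => -(r * s)) (-(r * 1)) t :=
      ((hasDerivAt_id t).const_mul r).neg
    have hE : HasDerivAt (fun s : ℝ => Real.exp (-(r * s)))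
        (Real.exp (-(r * t)) * -(r * 1)) t := hin.exp
    have hDd : HasDerivAt (fun s : ℝ => 1 + c * Real.exp (-(r * s)))
        (c * (Real.exp (-(r * t)) * -(r * 1))) t := (hE.const_mul c).const_add 1
    have hinv := hDd.inv (ne_of_gt (hDpos t))
    refine hinv.congr_deriv ?_
    have hDne : (1 + c * Real.exp (-(r * t))) ≠ 0 := ne_of_gt (hDpos t)
    simp only [hg]
    field_simp
    ring
  -- clopen argument
  set A : Set ℝ := {t | lam t = g t} with hA
  have hlamcont : Continuous lam := by
    refine continuous_iff_continuousAt.mpr fun t => (hlamODE t).continuousAt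
  have hgcont : Continuous g := by
    have : Continuous fun t : ℝ => 1 + c * Real.exp (-(r * t)) := by continuity
    exact this.inv₀ fun t => ne_of_gt (hDpos t)
  have hclosed : IsClosed A := isClosed_eq hlamcont hgcont
  have hopen : IsOpen A := by
    rw [isOpen_iff_mem_nhds]
    intro t₀ ht₀
    have hmem : lam t₀ ∈ Set.Ioo (-2 : ℝ) 2 := by
      have := hgmem t₀
      have : g t₀ ∈ Set.Ioo (0:ℝ) 1 := this
      constructor <;> [skip; skip] <;>
        · rw [Set.mem_setOf_eq] at ht₀
          rw [ht₀]
          rcases hgmem t₀ with ⟨h1, h2⟩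
          linarith
    have hev : ∀ᶠ t in nhds t₀, lam t ∈ Set.Ioo (-2 : ℝ) 2 :=
      hlamcont.continuousAt.eventually_mem (isOpen_Ioo.mem_nhds hmem)
    set K : NNReal := Real.toNNReal (5 * r) with hK
    have hKval : (K : ℝ) = 5 * r := Real.coe_toNNReal _ (by positivity)
    have hv : ∀ t : ℝ, LipschitzOnWith K (fun x : ℝ => r * x * (1 - x))
        (Set.Icc (-2 : ℝ) 2) := by
      intro t
      apply LipschitzOnWith.of_dist_le_mul
      intro x hx y hy
      rw [Real.dist_eq, Real.dist_eq, hKval]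
      have h1 : r * x * (1 - x) - r * y * (1 - y) = r * (x - y) * (1 - (x + y)) := by
        ring
      rw [h1, abs_mul, abs_mul, abs_of_pos hr]
      rcases hx with ⟨hx1, hx2⟩
      rcases hy with ⟨hy1, hy2⟩
      have h2 : |1 - (x + y)| ≤ 5 := by
        rw [abs_le]; constructor <;> linarith
      nlinarith [mul_le_mul_of_nonneg_left h2 (mul_nonneg hr.le (abs_nonneg (x - y))),
        abs_nonneg (x - y)]
    have huniq : lam =ᶠ[nhds t₀] g := by
      apply ODE_solution_unique_of_eventually (Filter.Eventually.of_forall hv)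
      · filter_upwards [hev] with t ht
        exact ⟨hlamODE t, Set.Ioo_subset_Icc_self ht⟩
      · filter_upwards with t
        refine ⟨hg' t, ?_⟩
        rcases hgmem t with ⟨h1, h2⟩
        exact Set.mem_Icc.mpr ⟨by linarith, by linarith⟩
      · exact ht₀
    exact huniq.mono fun t ht => ht
  have hne : (0 : ℝ) ∈ A := h0
  have : A = Set.univ := by
    have : IsClopen A := ⟨hclosed, hopen⟩
    exact this.eq_univ ⟨0, hne⟩
  intro t
  have : t ∈ A := this ▸ Set.mem_univ t
  exact this

/-- At the rate `r = δ²/(1 − δ)` the Unique Logistic planar system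
`x' = −(x − λ)(x − λ − δ)`, `λ' = rλ(1 − λ)` has a heteroclinic connection
from `(δ, 0)` to `(1, 1)`, realized by `x(t) = λ(t) + δ(1 − λ(t))` along any
logistic solution `λ` with `λ(0) ∈ (0,1)`.  For `δ = 1/2` the rate is `1/2`. -/
theorem unique_logistic_heteroclinic_connection (δ : ℝ) (hδ0 : 0 < δ)
    (hδ1 : δ < 1) (lam : ℝ → ℝ)
    (hlamODE : ∀ t : ℝ,
      HasDerivAt lam (δ ^ 2 / (1 - δ) * lam t * (1 - lam t)) t)
    (hlam0 : lam 0 ∈ Set.Ioo (0 : ℝ) 1) :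
    (∀ t : ℝ, lam t ∈ Set.Ioo (0 : ℝ) 1) ∧
    (∀ t : ℝ, HasDerivAt (fun s => lam s + δ * (1 - lam s))
      (-((lam t + δ * (1 - lam t)) - lam t) *
        ((lam t + δ * (1 - lam t)) - lam t - δ)) t) ∧
    Tendsto (fun t : ℝ => (lam t + δ * (1 - lam t), lam t)) atBot
      (nhds (δ, 0)) ∧
    Tendsto (fun t : ℝ => (lam t + δ * (1 - lam t), lam t)) atTop
      (nhds ((1 : ℝ), (1 : ℝ))) ∧
    (δ = 1 / 2 → δ ^ 2 / (1 - δ) = 1 / 2) := by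
  have h1δ : (0 : ℝ) < 1 - δ := by linarith
  set r : ℝ := δ ^ 2 / (1 - δ) with hrdef
  have hr : 0 < r := by positivity
  rcases hlam0 with ⟨hl0, hl1⟩
  set c : ℝ := (1 - lam 0) / lam 0 with hcdef
  have hc : 0 < c := div_pos (by linarith) hl0
  have h0 : lam 0 = (1 + c * Real.exp (-(r * 0)))⁻¹ := by
    rw [mul_zero, neg_zero, Real.exp_zero, mul_one, hcdef]
    field_simp
    ring
  have hlg : ∀ t : ℝ, lam t = (1 + c * Real.exp (-(r * t)))⁻¹ :=
    logistic_solution_eq r c hr hc lam hlamODE h0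
  have hDpos : ∀ t, 0 < 1 + c * Real.exp (-(r * t)) := fun t => by positivity
  have hD1 : ∀ t, 1 < 1 + c * Real.exp (-(r * t)) := fun t => by
    nlinarith [Real.exp_pos (-(r * t))]
  refine ⟨?_, ?_, ?_, ?_, ?_⟩
  · intro t
    rw [hlg t]
    exact ⟨inv_pos.mpr (hDpos t), inv_lt_one_of_one_lt₀ (hD1 t)⟩
  · intro t
    have h := (hlamODE t).add (((hlamODE t).const_sub 1).const_mul δ)
    refine h.congr_deriv ?_
    have hrr : r * (1 - δ) = δ ^ 2 := by
      rw [hrdef]; field_simp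
    linear_combination (lam t * (1 - lam t)) * hrr
  · -- t → -∞
    have h1 : Tendsto (fun t : ℝ => r * t) atBot atBot := tendsto_id.const_mul_atBot hr
    have hexp : Tendsto (fun t : ℝ => Real.exp (-(r * t))) atBot atTop :=
      Real.tendsto_exp_atTop.comp (tendsto_neg_atBot_atTop.comp h1)
    have hD : Tendsto (fun t : ℝ => 1 + c * Real.exp (-(r * t))) atBot atTop :=
      tendsto_atTop_add_const_left _ 1 (hexp.const_mul_atTop hc)
    have hlam_bot : Tendsto lam atBot (nhds 0) :=
      Tendsto.congr (fun t => (hlg t).symm) (tendsto_inv_atTop_zero.comp hD)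
    have hx : Tendsto (fun t : ℝ => lam t + δ * (1 - lam t)) atBot
        (nhds (0 + δ * (1 - 0))) :=
      hlam_bot.add ((tendsto_const_nhds.sub hlam_bot).const_mul δ)
    have hp := hx.prodMk_nhds hlam_bot
    have he : ((δ : ℝ), (0 : ℝ)) = (0 + δ * (1 - 0), 0) := by norm_num
    rw [he]
    exact hp
  · -- t → +∞
    have h1 : Tendsto (fun t : ℝ => r * t) atTop atTop := tendsto_id.const_mul_atTop hr
    have hexp : Tendsto (fun t : ℝ => Real.exp (-(r * t))) atTop (nhds 0) :=
      Real.tendsto_exp_atBot.comp (tendsto_neg_atTop_atBot.comp h1)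
    have hD : Tendsto (fun t : ℝ => 1 + c * Real.exp (-(r * t))) atTop
        (nhds (1 + c * 0)) := (hexp.const_mul c).const_add 1
    have hlam_top : Tendsto lam atTop (nhds ((1 + c * 0)⁻¹)) :=
      Tendsto.congr (fun t => (hlg t).symm) (hD.inv₀ (by norm_num))
    have h2 : ((1 : ℝ) + c * 0)⁻¹ = 1 := by norm_num
    rw [h2] at hlam_top
    have hx : Tendsto (fun t : ℝ => lam t + δ * (1 - lam t)) atTop
        (nhds (1 + δ * (1 - 1))) :=
      hlam_top.add ((tendsto_const_nhds.sub hlam_top).const_mul δ)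
    have hp := hx.prodMk_nhds hlam_top
    have he : ((1 : ℝ), (1 : ℝ)) = (1 + δ * (1 - 1), 1) := by norm_num
    rw [he]
    exact hp
  · intro h
    rw [hrdef, h]; norm_num
end
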